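/- arXiv:2501.14463 — 7 statements merged into one kernel-verified Lean document; each statement's English description precedes it below -/
import Mathlib

section
/- Let X be a non-trivial (|X| > 1) strongly irreducible subshift on a group G with strong irreducibility constant K. Then Fix(X) ⊆ K, where Fix(X) = {g ∈ G : g·x = x for all x ∈ X}; in particular Fix(X) is finite. -/
/-!
If `g ∉ K`, strong irreducibility glues any symbol seen at `1` with any symbol seen at `g` into
one configuration `z ∈ X`. If moreover `g` fixes every point of `X`, then `z g = z 1` and the
same holds for every point of `X`, so all points of `X` carry the same symbol at `1`; by shift
invariance they then agree everywhere, and `X` is trivial.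
-/

/-- The (left) shift action on configurations: `(shift g x) h = x (g⁻¹ * h)`. -/
def shift {G A : Type*} [Group G] (g : G) (x : G → A) : G → A := fun h => x (g⁻¹ * h)

/-- A subshift: a closed, shift-invariant subset of the full shift `A^G`. -/
def IsSubshift {G A : Type*} [Group G] [TopologicalSpace A] (X : Set (G → A)) : Prop :=
  IsClosed X ∧ ∀ g : G, ∀ x ∈ X, shift g x ∈ X

/-- `X` is strongly irreducible with constant `K`: whenever `S * K ∩ T = ∅`, any two
patterns of `X` with supports `S` and `T` can be jointly realized in `X`. -/
def StronglyIrreducible {G A : Type*} [Group G] (X : Set (G → A)) (K : Finset G) : Prop :=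
  ∀ S T : Finset G, (∀ s ∈ S, ∀ k ∈ K, s * k ∉ T) →
    ∀ x ∈ X, ∀ y ∈ X, ∃ z ∈ X, (∀ g ∈ S, z g = x g) ∧ (∀ g ∈ T, z g = y g)

section

variable {G A : Type*} [Group G]

@[simp]
lemma shift_apply (g : G) (x : G → A) (h : G) : shift g x h = x (g⁻¹ * h) := rfl

lemma apply_eq_apply_one_of_shift_eq_self {g : G} {x : G → A} (hx : shift g x = x) :
    x g = x 1 := by
  simpa using (congrFun hx g).symm

lemma exists_apply_one_ne_of_shift_invariant {X : Set (G → A)}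
    (hinv : ∀ g : G, ∀ x ∈ X, shift g x ∈ X) (hnt : ∃ x ∈ X, ∃ y ∈ X, x ≠ y) :
    ∃ x ∈ X, ∃ y ∈ X, x 1 ≠ y 1 := by
  obtain ⟨x, hx, y, hy, hxy⟩ := hnt
  obtain ⟨h, hh⟩ := Function.ne_iff.mp hxy
  exact ⟨shift h⁻¹ x, hinv _ _ hx, shift h⁻¹ y, hinv _ _ hy, by simpa using hh⟩

lemma StronglyIrreducible.exists_eq_at_one_and_at {X : Set (G → A)} {K : Finset G}
    (hSI : StronglyIrreducible X K) {g : G} (hg : g ∉ K) {x y : G → A} (hx : x ∈ X)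
    (hy : y ∈ X) : ∃ z ∈ X, z 1 = x 1 ∧ z g = y g := by
  have hsep : ∀ s ∈ ({1} : Finset G), ∀ k ∈ K, s * k ∉ ({g} : Finset G) := by
    rintro s hs k hk hkg
    rw [Finset.mem_singleton] at hs hkg
    rw [hs, one_mul] at hkg
    exact hg (hkg ▸ hk)
  obtain ⟨z, hz, hz1, hzg⟩ := hSI {1} {g} hsep x hx y hy
  exact ⟨z, hz, hz1 1 (Finset.mem_singleton_self 1), hzg g (Finset.mem_singleton_self g)⟩

end

theorem stmt2_general {G A : Type*} [Group G] [TopologicalSpace A]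
    (X : Set (G → A)) (hX : IsSubshift X) (hnt : ∃ x ∈ X, ∃ y ∈ X, x ≠ y)
    (K : Finset G) (hSI : StronglyIrreducible X K) :
    ∀ g : G, (∀ x ∈ X, shift g x = x) → g ∈ K := by
  intro g hfix
  by_contra hgK
  obtain ⟨x, hx, y, hy, hxy⟩ := exists_apply_one_ne_of_shift_invariant hX.2 hnt
  obtain ⟨z, hz, hz1, hzg⟩ := hSI.exists_eq_at_one_and_at hgK hx hy
  apply hxy
  calc x 1 = z 1 := hz1.symm
    _ = z g := (apply_eq_apply_one_of_shift_eq_self (hfix z hz)).symm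
    _ = y g := hzg
    _ = y 1 := apply_eq_apply_one_of_shift_eq_self (hfix y hy)

/-- for a non-trivial strongly irreducible subshift with constant `K`,
the kernel of the shift action is contained in `K` (in particular it is finite). -/
theorem stmt2 {G A : Type*} [Group G] [Fintype A] [TopologicalSpace A] [DiscreteTopology A]
    (X : Set (G → A)) (hX : IsSubshift X) (hnt : ∃ x ∈ X, ∃ y ∈ X, x ≠ y)
    (K : Finset G) (hSI : StronglyIrreducible X K) :
    ∀ g : G, (∀ x ∈ X, shift g x = x) → g ∈ K :=
  stmt2_general X hX hnt K hSI
end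

section
/- Let G be a group whose only finite normal subgroup is trivial (e.g., a torsion-free group). Then the shift action of G on every non-trivial strongly irreducible G-subshift is faithful. -/
section Shift

variable {G A : Type*} [Group G]

lemma shift_one (x : G → A) : shift 1 x = x := by
  funext h; simp [shift]

lemma shift_mul (a b : G) (x : G → A) : shift (a * b) x = shift a (shift b x) := by
  funext h; simp [shift, mul_assoc]

lemma shift_inv_shift (a : G) (x : G → A) : shift a⁻¹ (shift a x) = x := by
  rw [← shift_mul, inv_mul_cancel, shift_one]

lemma shift_shift_inv (a : G) (x : G → A) : shift a (shift a⁻¹ x) = x := by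
  simpa using shift_inv_shift a⁻¹ x

def shiftKernel (X : Set (G → A)) : Subgroup G where
  carrier := {g | ∀ x ∈ X, shift g x = x}
  one_mem' x _ := shift_one x
  mul_mem' {a b} ha hb x hx := by rw [shift_mul, hb x hx, ha x hx]
  inv_mem' {a} ha x hx := by
    conv_lhs => rw [← ha x hx]
    exact shift_inv_shift a x

lemma mem_shiftKernel {X : Set (G → A)} {g : G} : g ∈ shiftKernel X ↔ ∀ x ∈ X, shift g x = x :=
  Iff.rfl

lemma shiftKernel_normal {X : Set (G → A)} (hX : ∀ g : G, ∀ x ∈ X, shift g x ∈ X) :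
    (shiftKernel X).Normal where
  conj_mem n hn h x hx := by
    rw [shift_mul, shift_mul, hn _ (hX h⁻¹ x hx), shift_shift_inv]

lemma eq_of_forall_apply_one_eq_apply {X : Set (G → A)} (hX : ∀ g : G, ∀ x ∈ X, shift g x ∈ X)
    {g : G} (hconst : ∀ x ∈ X, ∀ y ∈ X, x 1 = y g) {x y : G → A} (hx : x ∈ X) (hy : y ∈ X) :
    x = y := by
  funext h
  simpa [shift, mul_assoc] using hconst _ (hX h⁻¹ x hx) _ (hX (g * h⁻¹) y hy)

lemma StronglyIrreducible.apply_one_eq_apply {X : Set (G → A)} {K : Finset G}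
    (hSI : StronglyIrreducible X K) {g : G} (hgK : g ∉ K) (hg : g ∈ shiftKernel X)
    {x y : G → A} (hx : x ∈ X) (hy : y ∈ X) : x 1 = y g := by
  have hdisj : ∀ s ∈ ({1} : Finset G), ∀ k ∈ K, s * k ∉ ({g} : Finset G) := by
    simp only [Finset.mem_singleton]
    rintro s rfl k hk rfl
    exact hgK (by simpa using hk)
  obtain ⟨z, hz, hzx, hzy⟩ := hSI {1} {g} hdisj x hx y hy
  have hz1 : z 1 = z g := by simpa [shift] using congrFun (hg z hz) g
  rw [← hzx 1 (Finset.mem_singleton_self 1), hz1, hzy g (Finset.mem_singleton_self g)]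

lemma StronglyIrreducible.shiftKernel_subset {X : Set (G → A)} {K : Finset G}
    (hSI : StronglyIrreducible X K) (hX : ∀ g : G, ∀ x ∈ X, shift g x ∈ X)
    (hnt : ∃ x ∈ X, ∃ y ∈ X, x ≠ y) : (shiftKernel X : Set G) ⊆ K := by
  intro g hg
  by_contra hgK
  obtain ⟨x, hx, y, hy, hxy⟩ := hnt
  exact hxy (eq_of_forall_apply_one_eq_apply hX
    (fun x hx y hy => hSI.apply_one_eq_apply hgK hg hx hy) hx hy)

end Shift

theorem stmt3_general {G A : Type*} [Group G] [TopologicalSpace A]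
    (hG : ∀ N : Subgroup G, N.Normal → (N : Set G).Finite → N = ⊥)
    (X : Set (G → A)) (hX : IsSubshift X) (hnt : ∃ x ∈ X, ∃ y ∈ X, x ≠ y)
    (K : Finset G) (hSI : StronglyIrreducible X K) :
    ∀ g : G, (∀ x ∈ X, shift g x = x) → g = 1 := by
  intro g hg
  have hfin : (shiftKernel X : Set G).Finite :=
    K.finite_toSet.subset (hSI.shiftKernel_subset hX.2 hnt)
  have htriv := hG _ (shiftKernel_normal hX.2) hfin
  simpa [htriv] using (mem_shiftKernel.mpr hg : g ∈ shiftKernel X)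

/-- if the only finite normal subgroup of `G` is trivial, then the shift
action of `G` on every non-trivial strongly irreducible `G`-subshift is faithful. -/
theorem stmt3 {G A : Type*} [Group G] [Fintype A] [TopologicalSpace A] [DiscreteTopology A]
    (hG : ∀ N : Subgroup G, N.Normal → (N : Set G).Finite → N = ⊥)
    (X : Set (G → A)) (hX : IsSubshift X) (hnt : ∃ x ∈ X, ∃ y ∈ X, x ≠ y)
    (K : Finset G) (hSI : StronglyIrreducible X K) :
    ∀ g : G, (∀ x ∈ X, shift g x = x) → g = 1 :=
  stmt3_general hG X hX hnt K hSI
end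

section
/- Let G be a group, X a nonempty strongly irreducible G-subshift with strong irreducibility constant K (finite, nonempty). Then for every finite F ⊆ G: |L_F(X)| ≥ |L_{{1}}(X)|^(|F| / (2|K|)). -/
/-- The number of patterns with support `F` appearing in `X`. -/
noncomputable def langCard {G A : Type*} [Group G] (X : Set (G → A)) (F : Finset G) : ℕ :=
  Set.ncard ((fun x : G → A => fun g : F => x (g : G)) '' X)

/-!
Greedily pick points of `F` one at a time, each time discarding the translate `vK` of the point
`v` just picked. This yields points `v₁, …, vₘ` of `F` with `|F| ≤ m (|K| + 1)` such that no later
point lies in `vᵢK`. Strong irreducibility then glues any choice of symbols at `v₁, …, vₘ` into a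
point of `X` (shift invariance makes every symbol of `L_{1}(X)` available at every `vᵢ`), so
`|L_{1}(X)|^m ≤ |L_F(X)|`, and `|K| + 1 ≤ 2|K|` finishes the count.
-/

open Set

theorem Set.ncard_univ_pi_const {ι α : Type*} [Fintype ι] (s : Set α) :
    (univ.pi fun _ : ι => s).ncard = s.ncard ^ Fintype.card ι := by
  rw [← Nat.card_coe_set_eq, Nat.card_congr (Equiv.Set.univPi _), Nat.card_fun,
    Nat.card_coe_set_eq, Nat.card_eq_fintype_card]

theorem exists_separated_list {G : Type*} [Mul G] [DecidableEq G] (K F : Finset G) :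
    ∃ l : List G, l.Nodup ∧ (∀ g ∈ l, g ∈ F) ∧ F.card ≤ l.length * (K.card + 1) ∧
      l.Pairwise (fun a b => ∀ k ∈ K, a * k ≠ b) := by
  induction F using Finset.strongInduction with
  | H F ih =>
  obtain rfl | ⟨v, hv⟩ := F.eq_empty_or_nonempty
  · exact ⟨[], by simp⟩
  set N := insert v (K.image (v * ·))
  have hssub : F \ N ⊂ F :=
    Finset.ssubset_iff_of_subset Finset.sdiff_subset |>.2 ⟨v, hv, by simp [N]⟩
  obtain ⟨l, hnd, hlF, hcard, hl⟩ := ih _ hssub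
  have hlN : ∀ g ∈ l, g ∉ N := fun g hg => (Finset.mem_sdiff.1 (hlF g hg)).2
  refine ⟨v :: l, ?_, ?_, ?_, ?_⟩
  · exact List.nodup_cons.2 ⟨fun h => hlN v h (Finset.mem_insert_self _ _), hnd⟩
  · exact List.forall_mem_cons.2 ⟨hv, fun g hg => (Finset.mem_sdiff.1 (hlF g hg)).1⟩
  · have hN : N.card ≤ K.card + 1 :=
      Finset.card_insert_le _ _ |>.trans (Nat.add_le_add_right Finset.card_image_le 1)
    calc F.card ≤ (F \ N).card + N.card := Finset.card_le_card_sdiff_add_card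
      _ ≤ l.length * (K.card + 1) + (K.card + 1) := Nat.add_le_add hcard hN
      _ = (v :: l).length * (K.card + 1) := by rw [List.length_cons, Nat.succ_mul]
  · refine List.pairwise_cons.2 ⟨fun b hb k hk hvk => hlN b hb ?_, hl⟩
    exact Finset.mem_insert_of_mem (Finset.mem_image.2 ⟨k, hk, hvk⟩)

section Language

variable {G A : Type*} [Group G] {X : Set (G → A)}

/-- The language `L_F(X)`. -/
def language (X : Set (G → A)) (F : Finset G) : Set (F → A) :=
  (fun x g => x g) '' X

theorem langCard_eq_ncard_language (F : Finset G) : langCard X F = (language X F).ncard := rfl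

theorem langCard_singleton (g : G) : langCard X {g} = ((fun x : G → A => x g) '' X).ncard := by
  have : Nonempty ({g} : Finset G) := ⟨⟨g, Finset.mem_singleton_self g⟩⟩
  have himage : language X {g} = Function.const _ '' ((fun x : G → A => x g) '' X) := by
    rw [image_image]
    refine image_congr fun x _ => funext fun h => ?_
    rw [Finset.mem_singleton.1 h.2, Function.const_apply]
  rw [langCard_eq_ncard_language, himage, ncard_image_of_injective _ Function.const_injective]

variable [Finite A]

theorem langCard_mono {E F : Finset G} (hEF : E ⊆ F) : langCard X E ≤ langCard X F := by
  have himage : language X E = (fun (p : F → A) (g : E) => p ⟨g, hEF g.2⟩) '' language X F := by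
    simp only [language, image_image]
  rw [langCard_eq_ncard_language, langCard_eq_ncard_language, himage]
  exact ncard_image_le

theorem one_le_langCard (hne : X.Nonempty) (F : Finset G) : 1 ≤ langCard X F :=
  (ncard_pos).2 (hne.image _)

end Language

section Gluing

variable {G A : Type*} [Group G] {X : Set (G → A)} {K : Finset G}

theorem image_eval_one_subset (hshift : ∀ g, ∀ x ∈ X, shift g x ∈ X) (g : G) :
    (fun x : G → A => x 1) '' X ⊆ (fun x => x g) '' X := by
  rintro _ ⟨x, hx, rfl⟩
  exact ⟨shift g x, hshift g x hx, by simp [shift]⟩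

theorem StronglyIrreducible.exists_mem_forall_mem_eq (hSI : StronglyIrreducible X K)
    (hne : X.Nonempty) {l : List G} (hl : l.Pairwise (fun a b => ∀ k ∈ K, a * k ≠ b))
    {φ : G → A} (hφ : ∀ g ∈ l, ∃ x ∈ X, x g = φ g) : ∃ z ∈ X, ∀ g ∈ l, z g = φ g := by
  classical
  induction l with
  | nil => exact ⟨hne.some, hne.some_mem, by simp⟩
  | cons v l ih =>
    obtain ⟨hv, hl⟩ := List.pairwise_cons.1 hl
    obtain ⟨y, hyX, hy⟩ := ih hl fun g hg => hφ g (List.mem_cons_of_mem _ hg)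
    obtain ⟨x, hxX, hxv⟩ := hφ v List.mem_cons_self
    have hsep : ∀ s ∈ ({v} : Finset G), ∀ k ∈ K, s * k ∉ l.toFinset := by
      rintro s hs k hk hsk
      rw [Finset.mem_singleton.1 hs] at hsk
      exact hv _ (List.mem_toFinset.1 hsk) k hk rfl
    obtain ⟨z, hzX, hzx, hzy⟩ := hSI _ _ hsep x hxX y hyX
    refine ⟨z, hzX, List.forall_mem_cons.2 ⟨?_, fun g hg => ?_⟩⟩
    · rw [hzx v (Finset.mem_singleton_self v), hxv]
    · rw [hzy g (List.mem_toFinset.2 hg), hy g hg]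

theorem StronglyIrreducible.pi_subset_language [DecidableEq G] (hSI : StronglyIrreducible X K)
    (hne : X.Nonempty) {l : List G} (hl : l.Pairwise (fun a b => ∀ k ∈ K, a * k ≠ b)) :
    univ.pi (fun g : l.toFinset => (fun x : G → A => x g) '' X) ⊆ language X l.toFinset := by
  intro ψ hψ
  let φ : G → A := fun g => if h : g ∈ l.toFinset then ψ ⟨g, h⟩ else hne.some g
  have hφ : ∀ g ∈ l, ∃ x ∈ X, x g = φ g := by
    intro g hg
    have hg' : g ∈ l.toFinset := List.mem_toFinset.2 hg
    obtain ⟨x, hxX, hx⟩ := hψ ⟨g, hg'⟩ (mem_univ _)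
    exact ⟨x, hxX, by simp only [φ, dif_pos hg', hx]⟩
  obtain ⟨z, hzX, hz⟩ := hSI.exists_mem_forall_mem_eq hne hl hφ
  refine ⟨z, hzX, funext fun g => ?_⟩
  show z g = ψ g
  rw [hz g (List.mem_toFinset.1 g.2)]
  simp only [φ, dif_pos g.2]

theorem StronglyIrreducible.langCard_one_pow_le [Finite A] (hSI : StronglyIrreducible X K)
    (hshift : ∀ g, ∀ x ∈ X, shift g x ∈ X) (hne : X.Nonempty) {F : Finset G} {l : List G}
    (hnd : l.Nodup) (hlF : ∀ g ∈ l, g ∈ F) (hl : l.Pairwise (fun a b => ∀ k ∈ K, a * k ≠ b)) :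
    langCard X {1} ^ l.length ≤ langCard X F := by
  classical
  calc langCard X {1} ^ l.length
      = (univ.pi fun _ : l.toFinset => (fun x : G → A => x 1) '' X).ncard := by
        rw [ncard_univ_pi_const, langCard_singleton, Fintype.card_coe,
          List.toFinset_card_of_nodup hnd]
    _ ≤ (language X l.toFinset).ncard :=
        ncard_le_ncard <| Subset.trans (pi_mono fun g _ => image_eval_one_subset hshift g)
          (hSI.pi_subset_language hne hl)
    _ ≤ langCard X F := langCard_mono fun g hg => hlF g (List.mem_toFinset.1 hg)

end Gluing

theorem stmt5_general {G A : Type*} [Group G] [Fintype A] [TopologicalSpace A]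
    (X : Set (G → A)) (hX : IsSubshift X) (hne : X.Nonempty)
    (K : Finset G) (hKne : K.Nonempty) (hSI : StronglyIrreducible X K) (F : Finset G) :
    langCard X {(1 : G)} ^ F.card ≤ langCard X F ^ (2 * K.card) := by
  classical
  obtain ⟨l, hnd, hlF, hcard, hl⟩ := exists_separated_list K F
  have hK : K.card + 1 ≤ 2 * K.card := by have := hKne.card_pos; omega
  calc langCard X {(1 : G)} ^ F.card
      ≤ langCard X {1} ^ (l.length * (K.card + 1)) :=
        Nat.pow_le_pow_right (one_le_langCard hne _) hcard
    _ = (langCard X {1} ^ l.length) ^ (K.card + 1) := pow_mul _ _ _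
    _ ≤ langCard X F ^ (K.card + 1) :=
        Nat.pow_le_pow_left (hSI.langCard_one_pow_le hX.2 hne hnd hlF hl) _
    _ ≤ langCard X F ^ (2 * K.card) := Nat.pow_le_pow_right (one_le_langCard hne _) hK

/-- for a nonempty strongly irreducible subshift with nonempty constant `K`,
`|L_F(X)| ≥ |L_{1}(X)|^(|F|/(2|K|))`, stated equivalently as
`|L_{1}(X)|^|F| ≤ |L_F(X)|^(2|K|)`. -/
theorem stmt5 {G A : Type*} [Group G] [Fintype A] [TopologicalSpace A] [DiscreteTopology A]
    (X : Set (G → A)) (hX : IsSubshift X) (hne : X.Nonempty)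
    (K : Finset G) (hKne : K.Nonempty) (hSI : StronglyIrreducible X K) (F : Finset G) :
    langCard X {(1 : G)} ^ F.card ≤ langCard X F ^ (2 * K.card) :=
  stmt5_general X hX hne K hKne hSI F
end

section
/- Let G be a group, X ⊆ A^G a non-trivial strongly irreducible subshift with constant K, and H ≤ G a subgroup containing K. Then for every x ∈ X and every y ∈ X|_H, the configuration obtained by replacing x on H by y (i.e., x|_{G∖H} ∨ y) lies in X. -/
open scoped Classical

/-- Restriction of a configuration to a subgroup. -/
def restrictH {G A : Type*} [Group G] (H : Subgroup G) (x : G → A) : H → A :=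
  fun h => x (h : G)

open Filter

theorem IsClosed.mem_of_forall_finset_exists_eqOn {ι A : Type*} [TopologicalSpace A]
    {X : Set (ι → A)} (hX : IsClosed X) {z : ι → A}
    (h : ∀ F : Finset ι, ∃ v ∈ X, ∀ i ∈ F, v i = z i) : z ∈ X := by
  choose v hvX hvz using h
  refine hX.mem_of_tendsto (b := atTop)
    (tendsto_pi_nhds.2 fun i => tendsto_nhds_of_eventually_eq ?_) (Eventually.of_forall hvX)
  filter_upwards [eventually_ge_atTop {i}] with F hF
  exact hvz F i (hF (Finset.mem_singleton_self i))

theorem StronglyIrreducible.exists_eqOn_splice_subgroup {G A : Type*} [Group G]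
    {X : Set (G → A)} {K : Finset G} (hSI : StronglyIrreducible X K) {H : Subgroup G}
    (hKH : ∀ k ∈ K, k ∈ H) {x w : G → A} (hx : x ∈ X) (hw : w ∈ X) (F : Finset G) :
    ∃ v ∈ X, ∀ g ∈ F, v g = if g ∈ H then w g else x g := by
  have hsep : ∀ s ∈ F.filter (· ∉ H), ∀ k ∈ K, s * k ∉ F.filter (· ∈ H) := by
    intro s hs k hk hsk
    exact (Finset.mem_filter.1 hs).2
      ((H.mul_mem_cancel_right (hKH k hk)).1 (Finset.mem_filter.1 hsk).2)
  obtain ⟨v, hv, hvx, hvw⟩ := hSI _ _ hsep x hx w hw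
  refine ⟨v, hv, fun g hg => ?_⟩
  split_ifs with hgH
  · exact hvw g (Finset.mem_filter.2 ⟨hg, hgH⟩)
  · exact hvx g (Finset.mem_filter.2 ⟨hg, hgH⟩)

theorem stmt11_general {G A : Type*} [Group G] [TopologicalSpace A]
    (X : Set (G → A)) (hX : IsSubshift X)
    (H : Subgroup G) (KH : Finset H)
    (hSI : StronglyIrreducible X (KH.map ⟨Subtype.val, Subtype.val_injective⟩))
    (x : G → A) (hx : x ∈ X) (y : H → A) (hy : y ∈ restrictH H '' X) :
    (fun g : G => if hg : g ∈ H then y ⟨g, hg⟩ else x g) ∈ X := by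
  obtain ⟨w, hw, rfl⟩ := hy
  have hKH : ∀ k ∈ KH.map ⟨Subtype.val, Subtype.val_injective⟩, k ∈ H := by
    simp only [Finset.mem_map, Function.Embedding.coeFn_mk]
    rintro _ ⟨k, -, rfl⟩
    exact k.2
  refine hX.1.mem_of_forall_finset_exists_eqOn fun F => ?_
  obtain ⟨v, hv, hvF⟩ := hSI.exists_eqOn_splice_subgroup hKH hx hw F
  refine ⟨v, hv, fun g hg => ?_⟩
  rw [hvF g hg]
  split_ifs <;> rfl

/-- splicing a configuration of the restriction `X|_H` into a configuration
of `X` over the subgroup `H` stays in `X`. -/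
theorem stmt11 {G A : Type*} [Group G] [Fintype A] [TopologicalSpace A] [DiscreteTopology A]
    (X : Set (G → A)) (hX : IsSubshift X) (hnt : ∃ x ∈ X, ∃ y ∈ X, x ≠ y)
    (H : Subgroup G) (KH : Finset H)
    (hSI : StronglyIrreducible X (KH.map ⟨Subtype.val, Subtype.val_injective⟩))
    (x : G → A) (hx : x ∈ X) (y : H → A) (hy : y ∈ restrictH H '' X) :
    (fun g : G => if hg : g ∈ H then y ⟨g, hg⟩ else x g) ∈ X :=
  stmt11_general X hX H KH hSI x hx y hy
end

section
/- Let r ≥ 4 and let G be a finitely generated group, with word metric d from a finite symmetric generating set, such that some element of G has word length greater than 38r. Then for every g ∈ G with |g| ≤ 38r, there exists h ∈ G with hB(r) ⊆ B(6r, 37r) ∩ gB(6r, 37r), where B(r) is the ball of radius r and B(a, b) = {x : a < |x| ≤ b}. -/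
/-!
It suffices to find `h` with `|h|` and `|g⁻¹h|` both in `[7r+1, 36r]`: right multiplication by
`u ∈ B(r)` changes both lengths by at most `r`. If `|g| > 14r+1`, take `h` on a geodesic from `1`
to `g` at distance `7r+1` from `g`. Otherwise take `h` on a geodesic from `1` to an element of
length `> 38r`, at distance `|g| + 7r + 1` from `1`; then `|g⁻¹h|` lies between `|h| - |g|` and
`|h| + |g|`.
-/

/-- The word length of `g` with respect to a generating set `S`: the least length of a
word in the elements of `S` whose product is `g`. -/
noncomputable def wordLength {G : Type*} [Group G] (S : Finset G) (g : G) : ℕ :=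
  sInf {n : ℕ | ∃ l : List G, (∀ s ∈ l, s ∈ S) ∧ l.length = n ∧ l.prod = g}

section

variable {G : Type*} [Group G] {S : Finset G}

theorem submonoid_closure_eq_top_of_inv_mem (hsym : ∀ s ∈ S, s⁻¹ ∈ S)
    (hgen : Subgroup.closure (S : Set G) = ⊤) : Submonoid.closure (S : Set G) = ⊤ := by
  have hinv : (S : Set G)⁻¹ ⊆ S := fun x hx => by simpa using hsym _ hx
  rw [← Set.union_eq_left.mpr hinv, ← Subgroup.closure_toSubmonoid, hgen]
  rfl

theorem wordLength_prod_le (l : List G) (hl : ∀ s ∈ l, s ∈ S) :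
    wordLength S l.prod ≤ l.length :=
  Nat.sInf_le ⟨l, hl, rfl, rfl⟩

theorem exists_geodesic_word (hS : Submonoid.closure (S : Set G) = ⊤) (g : G) :
    ∃ l : List G, (∀ s ∈ l, s ∈ S) ∧ l.length = wordLength S g ∧ l.prod = g := by
  obtain ⟨l, hl, hprod⟩ := Submonoid.exists_list_of_mem_closure (hS ▸ Submonoid.mem_top g)
  exact Nat.sInf_mem (s := {n | ∃ l : List G, (∀ s ∈ l, s ∈ S) ∧ l.length = n ∧ l.prod = g})
    ⟨l.length, l, hl, rfl, hprod⟩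

theorem wordLength_mul_le (hS : Submonoid.closure (S : Set G) = ⊤) (a b : G) :
    wordLength S (a * b) ≤ wordLength S a + wordLength S b := by
  obtain ⟨la, hla, hlena, rfl⟩ := exists_geodesic_word hS a
  obtain ⟨lb, hlb, hlenb, rfl⟩ := exists_geodesic_word hS b
  have := wordLength_prod_le (la ++ lb) fun s hs => (List.mem_append.mp hs).elim (hla s) (hlb s)
  rwa [List.prod_append, List.length_append, hlena, hlenb] at this

theorem wordLength_inv_le (hsym : ∀ s ∈ S, s⁻¹ ∈ S) (hS : Submonoid.closure (S : Set G) = ⊤)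
    (a : G) : wordLength S a⁻¹ ≤ wordLength S a := by
  obtain ⟨l, hl, hlen, rfl⟩ := exists_geodesic_word hS a
  have := wordLength_prod_le (l.map (·⁻¹)).reverse fun s hs => by
    obtain ⟨x, hx, rfl⟩ := List.mem_map.mp (List.mem_reverse.mp hs)
    exact hsym _ (hl _ hx)
  rwa [← List.prod_inv_reverse, List.length_reverse, List.length_map, hlen] at this

theorem wordLength_inv (hsym : ∀ s ∈ S, s⁻¹ ∈ S) (hS : Submonoid.closure (S : Set G) = ⊤)
    (a : G) : wordLength S a⁻¹ = wordLength S a :=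
  (wordLength_inv_le hsym hS a).antisymm (by simpa using wordLength_inv_le hsym hS a⁻¹)

theorem wordLength_le_mul_add (hsym : ∀ s ∈ S, s⁻¹ ∈ S)
    (hS : Submonoid.closure (S : Set G) = ⊤) (a b : G) :
    wordLength S a ≤ wordLength S (a * b) + wordLength S b := by
  simpa [wordLength_inv hsym hS] using wordLength_mul_le hS (a * b) b⁻¹

theorem exists_wordLength_eq_of_le (hS : Submonoid.closure (S : Set G) = ⊤) (g : G) (t : ℕ)
    (ht : t ≤ wordLength S g) :
    ∃ h : G, wordLength S h = t ∧ wordLength S (h⁻¹ * g) = wordLength S g - t := by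
  obtain ⟨l, hl, hlen, hprod⟩ := exists_geodesic_word hS g
  refine ⟨(l.take t).prod, ?_⟩
  have hsplit : (l.take t).prod * (l.drop t).prod = g := by
    rw [← List.prod_append, List.take_append_drop, hprod]
  have hprefix : wordLength S (l.take t).prod ≤ t :=
    (wordLength_prod_le _ fun s hs => hl s (List.mem_of_mem_take hs)).trans (by simp)
  have hsuffix : wordLength S ((l.take t).prod⁻¹ * g) ≤ wordLength S g - t := by
    conv_lhs => rw [← hsplit, inv_mul_cancel_left]
    exact (wordLength_prod_le _ fun s hs => hl s (List.mem_of_mem_drop hs)).trans (by simp [hlen])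
  have htri := wordLength_mul_le hS (l.take t).prod ((l.take t).prod⁻¹ * g)
  rw [mul_inv_cancel_left] at htri
  omega

theorem exists_wordLength_and_wordLength_inv_mul_between (hsym : ∀ s ∈ S, s⁻¹ ∈ S)
    (hS : Submonoid.closure (S : Set G) = ⊤) {r : ℕ} (hr : 3 ≤ r)
    (hdiam : ∃ g₀ : G, 38 * r < wordLength S g₀) (g : G) (hg : wordLength S g ≤ 38 * r) :
    ∃ h : G, (7 * r + 1 ≤ wordLength S h ∧ wordLength S h ≤ 36 * r) ∧
      (7 * r + 1 ≤ wordLength S (g⁻¹ * h) ∧ wordLength S (g⁻¹ * h) ≤ 36 * r) := by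
  by_cases hshort : wordLength S g ≤ 14 * r + 1
  · obtain ⟨g₀, hg₀⟩ := hdiam
    obtain ⟨h, hh, -⟩ := exists_wordLength_eq_of_le hS g₀ (wordLength S g + 7 * r + 1) (by omega)
    have hlower := wordLength_mul_le hS g (g⁻¹ * h)
    have hupper := wordLength_mul_le hS g⁻¹ h
    rw [mul_inv_cancel_left] at hlower
    rw [wordLength_inv hsym hS] at hupper
    exact ⟨h, ⟨by omega, by omega⟩, by omega, by omega⟩
  · obtain ⟨h, hh, hh'⟩ := exists_wordLength_eq_of_le hS g (wordLength S g - (7 * r + 1)) (by omega)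
    have hdist : wordLength S (g⁻¹ * h) = 7 * r + 1 := by
      rw [← inv_inv (g⁻¹ * h), mul_inv_rev, inv_inv, wordLength_inv hsym hS, hh']
      omega
    exact ⟨h, ⟨by omega, by omega⟩, by omega, by omega⟩

end

/-- if `r ≥ 4` and some element of `G` has word length `> 38r`, then for
every `g` with `|g| ≤ 38r` there exists `h` with `h·B(r) ⊆ B(6r,37r) ∩ g·B(6r,37r)`,
where `B(a,b) = {x : a < |x| ≤ b}`. -/
theorem stmt15 {G : Type*} [Group G] (S : Finset G) (hsym : ∀ s ∈ S, s⁻¹ ∈ S)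
    (hgen : Subgroup.closure (S : Set G) = ⊤) (r : ℕ) (hr : 4 ≤ r)
    (hdiam : ∃ g₀ : G, 38 * r < wordLength S g₀) :
    ∀ g : G, wordLength S g ≤ 38 * r →
      ∃ h : G, ∀ u : G, wordLength S u ≤ r →
        (6 * r < wordLength S (h * u) ∧ wordLength S (h * u) ≤ 37 * r) ∧
        (6 * r < wordLength S (g⁻¹ * (h * u)) ∧ wordLength S (g⁻¹ * (h * u)) ≤ 37 * r) := by
  intro g hg
  have hS := submonoid_closure_eq_top_of_inv_mem hsym hgen
  obtain ⟨h, ⟨hh₁, hh₂⟩, hgh₁, hgh₂⟩ :=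
    exists_wordLength_and_wordLength_inv_mul_between hsym hS (by omega) hdiam g hg
  refine ⟨h, fun u hu => ?_⟩
  have h₁ := wordLength_mul_le hS h u
  have h₂ := wordLength_le_mul_add hsym hS h u
  have h₃ := wordLength_mul_le hS (g⁻¹ * h) u
  have h₄ := wordLength_le_mul_add hsym hS (g⁻¹ * h) u
  rw [mul_assoc] at h₃ h₄
  omega
end

section
/- Let G be a finitely generated nonamenable group with finite symmetric generating set S. Then there exists a constant C ≥ 1 such that for every positive integer m and every m-covering subset Δ ⊆ G, there exists a bijection φ : G → Δ with d_S(g, φ(g)) ≤ Cm for all g ∈ G. -/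
/-!
Iterating the isoperimetric inequality `|F T| ≥ (1 + δ)|F|` of a nonamenable group gives
`|F B(Rm)| ≥ (1 + δ)^(am) |F| ≥ |B(m)| |F|`, because balls grow at most exponentially.
Sending each point of `F B(Rm)` to a point of `Δ` within distance `m` is at most
`|B(m)|`-to-one, so every finite `F` has at least `|F|` points of `Δ` within distance
`(R + 1)m`. Hall's theorem then gives
an injection `G → Δ` moving points by at most `(R + 1)m`, the inclusion `Δ → G` is one in the
other direction, and the relational Schröder–Bernstein theorem merges the two into a bijection.
-/

open scoped Pointwise

/-- `G` is nonamenable: there are a finite `T` and `δ > 0` with `|FT ∖ F| > δ|F|` for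
every finite nonempty `F ⊆ G`. -/
def IsNonamenable (G : Type*) [Group G] [DecidableEq G] : Prop :=
  ∃ T : Finset G, ∃ δ : ℝ, 0 < δ ∧
    ∀ F : Finset G, F.Nonempty → δ * (F.card : ℝ) < (((F * T) \ F).card : ℝ)

open Finset

section WordLength

variable {G : Type*} [Group G] {S : Finset G}

theorem wordLength_list_prod_le {l : List G} (hl : ∀ s ∈ l, s ∈ S) :
    wordLength S l.prod ≤ l.length := by
  apply Nat.sInf_le
  exact ⟨l, hl, rfl, rfl⟩

theorem exists_list_prod_eq (hsym : ∀ s ∈ S, s⁻¹ ∈ S)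
    (hgen : Subgroup.closure (S : Set G) = ⊤) (g : G) :
    ∃ l : List G, (∀ s ∈ l, s ∈ S) ∧ l.prod = g := by
  have hg : g ∈ Submonoid.closure ((S : Set G) ∪ (S : Set G)⁻¹) := by
    rw [← Subgroup.closure_toSubmonoid, hgen]
    exact Subgroup.mem_top g
  obtain ⟨l, hl, rfl⟩ := Submonoid.exists_list_of_mem_closure hg
  refine ⟨l, fun s hs => ?_, rfl⟩
  rcases hl s hs with h | h
  · exact h
  · exact inv_inv s ▸ hsym _ h

theorem exists_list_length_eq_wordLength (hsym : ∀ s ∈ S, s⁻¹ ∈ S)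
    (hgen : Subgroup.closure (S : Set G) = ⊤) (g : G) :
    ∃ l : List G, (∀ s ∈ l, s ∈ S) ∧ l.length = wordLength S g ∧ l.prod = g := by
  obtain ⟨l, hl, rfl⟩ := exists_list_prod_eq hsym hgen g
  exact Nat.sInf_mem (s := {n | ∃ l' : List G, (∀ s ∈ l', s ∈ S) ∧ l'.length = n ∧
    l'.prod = l.prod}) ⟨l.length, l, hl, rfl, rfl⟩

end WordLength

section WordBall

variable {G : Type*} [Group G] [DecidableEq G] (S : Finset G)

def wordBall (n : ℕ) : Finset G := insert 1 S ^ n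

variable {S}

theorem one_mem_wordBall (n : ℕ) : (1 : G) ∈ wordBall S n :=
  one_mem_pow (mem_insert_self 1 S)

theorem wordBall_mono {a b : ℕ} (h : a ≤ b) : wordBall S a ⊆ wordBall S b :=
  pow_subset_pow_right (mem_insert_self 1 S) h

theorem wordBall_add (a b : ℕ) : wordBall S (a + b) = wordBall S a * wordBall S b :=
  pow_add _ a b

theorem wordBall_mul (a b : ℕ) : wordBall S (a * b) = wordBall S a ^ b :=
  pow_mul _ a b

theorem inv_mem_wordBall_iff (hsym : ∀ s ∈ S, s⁻¹ ∈ S) {n : ℕ} {g : G} :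
    g⁻¹ ∈ wordBall S n ↔ g ∈ wordBall S n := by
  have hS : S⁻¹ = S := by
    ext x
    rw [mem_inv']
    exact ⟨fun h => inv_inv x ▸ hsym _ h, hsym x⟩
  rw [← mem_inv', wordBall, ← inv_pow, inv_insert, inv_one, hS]

theorem card_wordBall_le (n : ℕ) : #(wordBall S n) ≤ (#S + 1) ^ n :=
  card_pow_le.trans (Nat.pow_le_pow_left (card_insert_le 1 S) n)

theorem list_prod_mem_wordBall {l : List G} (hl : ∀ s ∈ l, s ∈ S) :
    l.prod ∈ wordBall S l.length := by
  induction l with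
  | nil => exact one_mem_wordBall 0
  | cons a l ih =>
    rw [List.prod_cons, List.length_cons, add_comm, wordBall_add]
    refine mul_mem_mul ?_ (ih fun s hs => hl s (List.mem_cons_of_mem a hs))
    rw [wordBall, pow_one]
    exact mem_insert_of_mem (hl a List.mem_cons_self)

theorem exists_list_of_mem_wordBall {n : ℕ} {g : G} (hg : g ∈ wordBall S n) :
    ∃ l : List G, (∀ s ∈ l, s ∈ S) ∧ l.length ≤ n ∧ l.prod = g := by
  induction n generalizing g with
  | zero =>
    rw [wordBall, pow_zero, mem_one] at hg
    exact ⟨[], by simp, le_rfl, hg.symm⟩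
  | succ n ih =>
    rw [wordBall, pow_succ', mem_mul] at hg
    obtain ⟨a, ha, b, hb, rfl⟩ := hg
    obtain ⟨l, hlS, hln, rfl⟩ := ih hb
    rcases mem_insert.1 ha with rfl | haS
    · exact ⟨l, hlS, hln.trans n.le_succ, (one_mul _).symm⟩
    · refine ⟨a :: l, ?_, Nat.succ_le_succ hln, List.prod_cons⟩
      simpa [haS] using hlS

theorem wordLength_le_iff_mem_wordBall (hsym : ∀ s ∈ S, s⁻¹ ∈ S)
    (hgen : Subgroup.closure (S : Set G) = ⊤) {g : G} {n : ℕ} :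
    wordLength S g ≤ n ↔ g ∈ wordBall S n := by
  constructor
  · intro h
    obtain ⟨l, hlS, hlen, rfl⟩ := exists_list_length_eq_wordLength hsym hgen g
    exact wordBall_mono (hlen ▸ h) (list_prod_mem_wordBall hlS)
  · intro h
    obtain ⟨l, hlS, hln, rfl⟩ := exists_list_of_mem_wordBall h
    exact (wordLength_list_prod_le hlS).trans hln

theorem exists_subset_wordBall (hsym : ∀ s ∈ S, s⁻¹ ∈ S)
    (hgen : Subgroup.closure (S : Set G) = ⊤) (T : Finset G) :
    ∃ r : ℕ, T ⊆ wordBall S r :=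
  ⟨T.sup (wordLength S), fun _ ht => (wordLength_le_iff_mem_wordBall hsym hgen).1 (le_sup ht)⟩

end WordBall

theorem IsNonamenable.exists_expansion {G : Type*} [Group G] [DecidableEq G]
    (hna : IsNonamenable G) :
    ∃ T : Finset G, ∃ δ : ℝ, 0 < δ ∧ ∀ F : Finset G, (1 + δ) * #F ≤ #(F * T) := by
  obtain ⟨T, δ, hδ, hT⟩ := hna
  refine ⟨insert 1 T, δ, hδ, fun F => ?_⟩
  rcases F.eq_empty_or_nonempty with rfl | hF
  · simp
  have hcard : #((F * T) \ F) + #F = #(F * insert 1 T) := by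
    rw [card_sdiff_add_card, insert_eq, mul_union, singleton_one, mul_one, union_comm]
  have := hT F hF
  calc (1 + δ) * #F = #F + δ * #F := by ring
    _ ≤ #((F * T) \ F) + #F := by linarith
    _ = #(F * insert 1 T) := mod_cast hcard

theorem pow_mul_card_le_card_mul_pow {M : Type*} [Monoid M] [DecidableEq M] {B : Finset M}
    {c : ℝ} (hc : 0 ≤ c) (hB : ∀ F : Finset M, c * #F ≤ #(F * B)) (k : ℕ) (F : Finset M) :
    c ^ k * #F ≤ #(F * B ^ k) := by
  induction k with
  | zero => simp
  | succ k ih =>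
    calc c ^ (k + 1) * #F = c * (c ^ k * #F) := by ring
      _ ≤ c * #(F * B ^ k) := by gcongr
      _ ≤ #(F * B ^ k * B) := hB _
      _ = #(F * B ^ (k + 1)) := by rw [pow_succ, mul_assoc]

theorem exists_card_wordBall_mul_le {G : Type*} [Group G] [DecidableEq G] {S : Finset G}
    (hsym : ∀ s ∈ S, s⁻¹ ∈ S) (hgen : Subgroup.closure (S : Set G) = ⊤)
    (hna : IsNonamenable G) :
    ∃ R : ℕ, ∀ (m : ℕ) (F : Finset G),
      #(wordBall S m) * #F ≤ #(F * wordBall S (R * m)) := by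
  obtain ⟨T, δ, hδ, hT⟩ := hna.exists_expansion
  obtain ⟨r, hTr⟩ := exists_subset_wordBall hsym hgen T
  obtain ⟨a, ha⟩ := pow_unbounded_of_one_lt ((#S : ℝ) + 1) (by linarith : 1 < 1 + δ)
  refine ⟨r * a, fun m F => ?_⟩
  have hball : (#(wordBall S m) : ℝ) ≤ (1 + δ) ^ (a * m) :=
    calc (#(wordBall S m) : ℝ) ≤ ((#S : ℝ) + 1) ^ m := mod_cast card_wordBall_le m
      _ ≤ ((1 + δ) ^ a) ^ m := by gcongr
      _ = (1 + δ) ^ (a * m) := (pow_mul _ a m).symm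
  have hsub : F * T ^ (a * m) ⊆ F * wordBall S (r * a * m) := by
    rw [mul_assoc r, wordBall_mul]
    exact mul_subset_mul_left (pow_subset_pow_left hTr)
  have hcard : (#(wordBall S m) : ℝ) * #F ≤ #(F * wordBall S (r * a * m)) :=
    calc (#(wordBall S m) : ℝ) * #F ≤ (1 + δ) ^ (a * m) * #F := by gcongr
      _ ≤ #(F * T ^ (a * m)) := pow_mul_card_le_card_mul_pow (by linarith) hT _ F
      _ ≤ #(F * wordBall S (r * a * m)) := mod_cast card_le_card hsub
  exact_mod_cast hcard

section Matching

variable {G : Type*} [Group G] [DecidableEq G]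

theorem card_le_card_mul_card_image_of_inv_mul_mem {U : Finset G} {f : G → G}
    (hf : ∀ h, h⁻¹ * f h ∈ U) (A : Finset G) : #A ≤ #U * #(A.image f) := by
  refine card_le_mul_card_image A _ fun b _ => ?_
  have hfiber : {h ∈ A | f h = b} ⊆ b • U⁻¹ := by
    intro h hh
    obtain ⟨-, rfl⟩ := mem_filter.1 hh
    rw [← inv_smul_mem_iff, mem_inv', smul_eq_mul, mul_inv_rev, inv_inv]
    exact hf h
  calc #{h ∈ A | f h = b} ≤ #(b • U⁻¹) := card_le_card hfiber
    _ = #U := by rw [card_smul_finset, card_inv]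

theorem exists_equiv_inv_mul_mem {Δ : Set G} {U V W : Finset G}
    (hcov : ∀ h : G, ∃ x ∈ Δ, h⁻¹ * x ∈ U)
    (hexp : ∀ F : Finset G, #U * #F ≤ #(F * V)) (hW : 1 ∈ W) (hVUW : V * U ⊆ W) :
    ∃ φ : G ≃ Δ, ∀ g, g⁻¹ * (φ g : G) ∈ W := by
  classical
  choose f hfΔ hfU using hcov
  let t : G → Finset Δ := fun g => (g • W).subtype (· ∈ Δ)
  have mem_t : ∀ g (x : Δ), x ∈ t g ↔ g⁻¹ * x ∈ W := fun g x => by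
    simp only [t, mem_subtype, ← inv_smul_mem_iff, smul_eq_mul]
  have hall : ∀ s : Finset G, #s ≤ #(s.biUnion t) := by
    intro s
    have himage : (s * V).image f ⊆ (s.biUnion t).image Subtype.val := by
      intro y hy
      obtain ⟨_, hgv, rfl⟩ := mem_image.1 hy
      obtain ⟨g, hg, v, hv, rfl⟩ := mem_mul.1 hgv
      refine mem_image.2
        ⟨⟨f (g * v), hfΔ _⟩, mem_biUnion.2 ⟨g, hg, (mem_t _ _).2 ?_⟩, rfl⟩
      have hdecomp : g⁻¹ * f (g * v) = v * ((g * v)⁻¹ * f (g * v)) := by group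
      exact hdecomp ▸ hVUW (mul_mem_mul hv (hfU _))
    have hcard : #U * #s ≤ #U * #(s.biUnion t) :=
      calc #U * #s ≤ #(s * V) := hexp s
        _ ≤ #U * #((s * V).image f) := card_le_card_mul_card_image_of_inv_mul_mem hfU _
        _ ≤ #U * #(s.biUnion t) := by
          gcongr
          exact (card_le_card himage).trans card_image_le
    exact Nat.le_of_mul_le_mul_left hcard (card_pos.2 ⟨_, hfU 1⟩)
  obtain ⟨ψ, hψ, hψt⟩ := (all_card_le_biUnion_card_iff_exists_injective t).1 hall
  obtain ⟨φ, hφ, hφW⟩ := Function.Embedding.schroeder_bernstein_of_rel hψ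
    Subtype.val_injective (fun g x => g⁻¹ * (x : G) ∈ W) (fun g => (mem_t g _).1 (hψt g))
    (fun x => by simpa using hW)
  exact ⟨Equiv.ofBijective φ hφ, hφW⟩

end Matching

/-- in a finitely generated nonamenable group there is `C ≥ 1` such that
for every `m ≥ 1` and every `m`-covering set `Δ`, there is a bijection `φ : G → Δ`
moving every point at distance at most `Cm`. -/
theorem stmt18 {G : Type*} [Group G] [DecidableEq G] (S : Finset G)
    (hsym : ∀ s ∈ S, s⁻¹ ∈ S) (hgen : Subgroup.closure (S : Set G) = ⊤)
    (hna : IsNonamenable G) :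
    ∃ C : ℕ, 1 ≤ C ∧ ∀ m : ℕ, 0 < m → ∀ Δ : Set G,
      (∀ h : G, ∃ x ∈ Δ, wordLength S (x⁻¹ * h) ≤ m) →
      ∃ φ : G ≃ Δ, ∀ g : G, wordLength S (g⁻¹ * (φ g : G)) ≤ C * m := by
  obtain ⟨R, hR⟩ := exists_card_wordBall_mul_le hsym hgen hna
  refine ⟨R + 1, Nat.le_add_left 1 R, fun m _ Δ hΔ => ?_⟩
  simp_rw [wordLength_le_iff_mem_wordBall hsym hgen] at hΔ ⊢
  have hcov : ∀ h : G, ∃ x ∈ Δ, h⁻¹ * x ∈ wordBall S m := fun h => by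
    obtain ⟨x, hx, hxh⟩ := hΔ h
    refine ⟨x, hx, (inv_mem_wordBall_iff hsym).1 ?_⟩
    rwa [mul_inv_rev, inv_inv]
  refine exists_equiv_inv_mul_mem hcov (hR m) (one_mem_wordBall _) ?_
  rw [← wordBall_add, add_one_mul]
end

section
/- Let G be a group such that the free group F_k (k ≥ 1) embeds into G. Then for every finite subset T ⊆ G there exist γ₁, …, γ_k ∈ G generating a subgroup isomorphic to F_k such that the family of translates {wT : w ∈ ⟨γ₁, …, γ_k⟩} is pairwise disjoint. -/
/-!
The endomorphism `φₙ : aᵢ ↦ aᵢⁿ` of `F_k` only repeats each letter of a reduced word `n` times, so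
the result is still reduced and `φₙ` multiplies word length by `n`. Pull back the finite set
`T T⁻¹` along the embedding `ψ`, let `n` exceed the lengths of the finitely many words obtained,
and take `γᵢ = ψ(aᵢⁿ)`. If `γ(u) t = γ(v) t'` with `u ≠ v`, then `ψ(φₙ(v⁻¹u)) = t' t⁻¹`, but
`φₙ(v⁻¹u)` has length at least `n`.
-/

open scoped Pointwise

theorem List.IsChain.flatMap_replicate {α : Type*} {R : α → α → Prop} (hR : ∀ a, R a a)
    {l : List α} (h : l.IsChain R) (n : ℕ) : (l.flatMap (replicate n)).IsChain R := by
  induction h with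
  | nil => simp
  | singleton a => simpa using isChain_replicate_of_rel n (hR a)
  | cons_cons hab h ih =>
    rw [flatMap_cons]
    refine (isChain_replicate_of_rel n (hR _)).append ih ?_
    intro x hx y hy
    simp_all [getLast?_replicate, head?_replicate]

namespace FreeGroup

variable {α : Type*}

theorem IsReduced.flatMap_replicate {L : List (α × Bool)} (h : IsReduced L) (n : ℕ) :
    IsReduced (L.flatMap (List.replicate n)) :=
  List.IsChain.flatMap_replicate (fun _ _ => rfl) h n

theorem lift_of_pow_mk_singleton (n : ℕ) (x : α × Bool) :
    lift (fun a => of a ^ n) (mk [x]) = mk [x] ^ n := by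
  obtain ⟨a, _ | _⟩ := x
  · have : mk [(a, false)] = (of a)⁻¹ := by simp [of, inv_mk, invRev]
    simp [this, inv_pow]
  · exact lift_apply_of (f := fun a => of a ^ n) (x := a)

theorem lift_of_pow_mk (n : ℕ) (L : List (α × Bool)) :
    lift (fun a => of a ^ n) (mk L) = mk (L.flatMap (List.replicate n)) := by
  induction L with
  | nil => rfl
  | cons x L ih =>
    rw [← List.singleton_append, ← mul_mk, MonoidHom.map_mul, ih, lift_of_pow_mk_singleton,
      pow_mk, List.singleton_append, List.flatMap_cons, mul_mk]
    simp only [List.flatten_replicate_singleton]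

variable [DecidableEq α]

theorem norm_lift_of_pow (n : ℕ) (x : FreeGroup α) :
    norm (lift (fun a => of a ^ n) x) = n * norm x := by
  conv_lhs => rw [← mk_toWord (x := x)]
  rw [lift_of_pow_mk, norm, toWord_mk, (isReduced_toWord.flatMap_replicate n).reduce_eq,
    List.length_flatMap, norm]
  simp only [List.length_replicate, List.map_const', List.sum_replicate, smul_eq_mul, mul_comm]

theorem le_norm_lift_of_pow (n : ℕ) {x : FreeGroup α} (hx : x ≠ 1) :
    n ≤ norm (lift (fun a => of a ^ n) x) := by
  rw [norm_lift_of_pow]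
  exact Nat.le_mul_of_pos_right n (Nat.pos_of_ne_zero (norm_eq_zero.not.mpr hx))

theorem lift_of_pow_injective {n : ℕ} (hn : n ≠ 0) :
    Function.Injective (lift fun a : α => of a ^ n) := by
  refine (injective_iff_map_eq_one _).2 fun x hx => ?_
  rw [← norm_eq_zero, ← mul_eq_zero_iff_left hn, ← norm_lift_of_pow, hx, norm_one]

end FreeGroup

open FreeGroup in
theorem stmt19_general {G : Type*} [Group G] (k : ℕ)
    (hemb : ∃ ψ : FreeGroup (Fin k) →* G, Function.Injective ψ) (T : Finset G) :
    ∃ γ : Fin k → G, Function.Injective (FreeGroup.lift γ) ∧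
      ∀ u v : FreeGroup (Fin k), u ≠ v → ∀ t ∈ T, ∀ t' ∈ T,
        (FreeGroup.lift γ) u * t ≠ (FreeGroup.lift γ) v * t' := by
  classical
  obtain ⟨ψ, hψ⟩ := hemb
  set B := (T * T⁻¹).preimage ψ hψ.injOn
  set n := B.sup FreeGroup.norm + 1
  set φ : FreeGroup (Fin k) →* FreeGroup (Fin k) := lift fun i => of i ^ n
  have hlift : lift (fun i => ψ (of i ^ n)) = ψ.comp φ := by ext; simp [φ]
  refine ⟨fun i => ψ (of i ^ n),
    hlift ▸ hψ.comp (lift_of_pow_injective (Nat.add_one_ne_zero _)), ?_⟩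
  intro u v huv t ht t' ht' htrans
  rw [hlift, MonoidHom.comp_apply, MonoidHom.comp_apply] at htrans
  have hquot : ψ (φ (v⁻¹ * u)) = t' * t⁻¹ := by
    rw [MonoidHom.map_mul, MonoidHom.map_mul, MonoidHom.map_inv, MonoidHom.map_inv,
      eq_mul_inv_iff_mul_eq, mul_assoc, htrans, inv_mul_cancel_left]
  have hmem : φ (v⁻¹ * u) ∈ B := by
    rw [Finset.mem_preimage, hquot]
    exact Finset.mul_mem_mul ht' (Finset.inv_mem_inv ht)
  have hshort := Finset.le_sup (f := FreeGroup.norm) hmem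
  have hlong : n ≤ (φ (v⁻¹ * u)).norm := le_norm_lift_of_pow n (inv_mul_eq_one.not.mpr huv.symm)
  omega

/-- if the free group `F_k` (`k ≥ 1`) embeds into `G`, then for every
finite `T ⊆ G` there are `γ₁, …, γ_k ∈ G` generating a free subgroup of rank `k`
(i.e. `FreeGroup.lift γ` is injective) whose translates `{wT : w ∈ ⟨γ₁,…,γ_k⟩}` are
pairwise disjoint. -/
theorem stmt19 {G : Type*} [Group G] (k : ℕ) (hk : 1 ≤ k)
    (hemb : ∃ ψ : FreeGroup (Fin k) →* G, Function.Injective ψ) (T : Finset G) :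
    ∃ γ : Fin k → G, Function.Injective (FreeGroup.lift γ) ∧
      ∀ u v : FreeGroup (Fin k), u ≠ v → ∀ t ∈ T, ∀ t' ∈ T,
        (FreeGroup.lift γ) u * t ≠ (FreeGroup.lift γ) v * t' :=
  stmt19_general k hemb T
end
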